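/- Suppose (u,w) solves the system of obstacle problems in B_r ⊂ ℝᵈ (i.e., it is both a subsolution and supersolution pair). If u - ½w ≤ r²/(4d) on ∂B_r, then u(0) = ½w(0). Similarly, if u ≤ r²/(4d) on ∂B_r, then u(0) = 0. -/

import Mathlib

open MeasureTheory Metric

noncomputable def lap {d : ℕ} (f : EuclideanSpace ℝ (Fin d) → ℝ) (x : EuclideanSpace ℝ (Fin d)) : ℝ :=
  ∑ i : Fin d, fderiv ℝ (fun y => fderiv ℝ f y (EuclideanSpace.single i 1)) x (EuclideanSpace.single i 1)

/-- `Δu ≥ f` on `Ω` in the distributional sense. -/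
def DistribLapGEOn {d : ℕ} (u f : EuclideanSpace ℝ (Fin d) → ℝ)
    (Ω : Set (EuclideanSpace ℝ (Fin d))) : Prop :=
  ∀ φ : EuclideanSpace ℝ (Fin d) → ℝ, ContDiff ℝ (⊤ : ℕ∞) φ → HasCompactSupport φ →
    tsupport φ ⊆ Ω → (∀ x, 0 ≤ φ x) → ∫ x, f x * φ x ≤ ∫ x, u x * lap φ x

/-- `Δu ≤ f` on `Ω` in the distributional sense. -/
def DistribLapLEOn {d : ℕ} (u f : EuclideanSpace ℝ (Fin d) → ℝ)
    (Ω : Set (EuclideanSpace ℝ (Fin d))) : Prop :=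
  ∀ φ : EuclideanSpace ℝ (Fin d) → ℝ, ContDiff ℝ (⊤ : ℕ∞) φ → HasCompactSupport φ →
    tsupport φ ⊆ Ω → (∀ x, 0 ≤ φ x) → ∫ x, u x * lap φ x ≤ ∫ x, f x * φ x

/-- The pointwise constraints `u ≥ 0`, `w ≥ 0`, `u ≥ ½w`, `w ≥ ½u` on `Ω`. -/
def PairConstraint {d : ℕ} (u w : EuclideanSpace ℝ (Fin d) → ℝ)
    (Ω : Set (EuclideanSpace ℝ (Fin d))) : Prop :=
  ∀ x ∈ Ω, 0 ≤ u x ∧ 0 ≤ w x ∧ w x / 2 ≤ u x ∧ u x / 2 ≤ w x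

/-- Subsolution pair for the system of obstacle problems. -/
def SubPair {d : ℕ} (u w : EuclideanSpace ℝ (Fin d) → ℝ)
    (Ω : Set (EuclideanSpace ℝ (Fin d))) : Prop :=
  PairConstraint u w Ω ∧
  DistribLapGEOn u (fun x => if w x / 2 < u x then 1 else 0) Ω ∧
  DistribLapGEOn w (fun x => if u x / 2 < w x then 1 else 0) Ω

/-- Supersolution pair for the system of obstacle problems. -/
def SuperPair {d : ℕ} (u w : EuclideanSpace ℝ (Fin d) → ℝ)
    (Ω : Set (EuclideanSpace ℝ (Fin d))) : Prop :=
  PairConstraint u w Ω ∧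
  DistribLapLEOn u (fun _ => 1) Ω ∧ DistribLapLEOn w (fun _ => 1) Ω

/-- Solution pair: both a subsolution and a supersolution pair. -/
def SolPair {d : ℕ} (u w : EuclideanSpace ℝ (Fin d) → ℝ)
    (Ω : Set (EuclideanSpace ℝ (Fin d))) : Prop :=
  SubPair u w Ω ∧ SuperPair u w Ω

/-!
Both claims follow from one estimate for a pair `f, g` with `Δf ≥ 1` where `f > g/2`,
`Δg ≥ 1` where `g > f/2`, and `f, g ≤ r²/(2d)` on `∂B_r`: then `max (f 0) (g 0) ≤ 0`.
The first claim is the case `f = g = 2u - w`, since `Δ(2u - w) ≥ 2 - 1` where `u > w/2`;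
the second is the case `f = u`, `g = w`, since `w ≤ 2u ≤ r²/(2d)` on the sphere.

For the estimate, mollify `f` and `g` at a small scale `ε` and maximise
`H = max f_ε g_ε - (1 - δ)|x|²/(2d)` over `B_{r-ε}`. Near the sphere `H` is at most
`r²/(2d) - (1 - δ)(r - 2δ)²/(2d) + δ`. At an interior maximum where `f_ε ≥ g_ε`, the point is a
local maximum of `f_ε - (1 - δ)|x|²/(2d)`, so `Δf_ε ≤ 1 - δ < 1` there; hence `f ≤ g/2` somewhere
within `ε`, which forces `f_ε ≤ 3δ` by uniform continuity. Since `H(0) ≥ max (f 0) (g 0) - δ`,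
letting `δ → 0` gives the estimate.
-/

open Set Filter
open scoped Convolution Topology RealInnerProductSpace

lemma deriv_deriv_nonpos_of_isLocalMax {f : ℝ → ℝ} {a : ℝ} (hc : ContinuousAt f a)
    (h : IsLocalMax f a) : deriv (deriv f) a ≤ 0 := by
  by_contra! hpos
  have hmin := isLocalMin_of_deriv_deriv_pos hpos h.deriv_eq_zero hc
  have hconst : f =ᶠ[𝓝 a] fun _ => f a := by
    filter_upwards [h, hmin] with t hle hge using le_antisymm hle hge
  rw [hconst.deriv.deriv_eq] at hpos
  simp at hpos

section NormedSpace

variable {V : Type*} [NormedAddCommGroup V] [NormedSpace ℝ V]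

lemma exists_mem_sphere_dist_eq_sub_norm {x : V} {r : ℝ} (hx : x ≠ 0) (hxr : ‖x‖ ≤ r) :
    ∃ p ∈ sphere (0 : V) r, dist x p = r - ‖x‖ := by
  have hx' : 0 < ‖x‖ := norm_pos_iff.2 hx
  refine ⟨(r / ‖x‖) • x, ?_, ?_⟩
  · simp [norm_smul, hx'.ne', abs_of_nonneg (hx'.le.trans hxr)]
  · rw [dist_eq_norm, show x - (r / ‖x‖) • x = (1 - r / ‖x‖) • x by rw [sub_smul, one_smul],
      norm_smul, Real.norm_eq_abs,
      abs_of_nonpos (by rw [sub_nonpos, one_le_div hx']; exact hxr), neg_sub, sub_mul,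
      div_mul_cancel₀ _ hx'.ne', one_mul]

lemma contDiff_fderiv_apply {f : V → ℝ} {n : WithTop ℕ∞} (hf : ContDiff ℝ (n + 1) f) (e : V) :
    ContDiff ℝ n fun y => fderiv ℝ f y e :=
  (hf.fderiv_right le_rfl).clm_apply contDiff_const

lemma fderiv_comp_const_sub_apply {h : V → ℝ} (hh : Differentiable ℝ h) (x y e : V) :
    fderiv ℝ (fun z => h (x - z)) y e = -fderiv ℝ h (x - y) e := by
  have : HasFDerivAt (fun z => h (x - z))
      ((fderiv ℝ h (x - y)).comp (-ContinuousLinearMap.id ℝ V)) y :=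
    (hh (x - y)).hasFDerivAt.comp y ((hasFDerivAt_id y).const_sub x)
  simp [this.fderiv]

lemma hasDerivAt_comp_add_smul {h : V → ℝ} (hh : Differentiable ℝ h) (x e : V) (t : ℝ) :
    HasDerivAt (fun s : ℝ => h (x + s • e)) (fderiv ℝ h (x + t • e) e) t := by
  have hline : HasDerivAt (fun s : ℝ => x + s • e) e t := by
    simpa using ((hasDerivAt_id t).smul_const e).const_add x
  exact (hh _).hasFDerivAt.comp_hasDerivAt t hline

end NormedSpace

section Euclidean

variable {d : ℕ}
local notation "E" => EuclideanSpace ℝ (Fin d)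

lemma lap_eq_zero_of_notMem_tsupport {f : E → ℝ} {x : E} (hx : x ∉ tsupport f) :
    lap f x = 0 :=
  Finset.sum_eq_zero fun _ _ => by
    rw [fderiv_of_notMem_tsupport ℝ fun h => hx (tsupport_fderiv_apply_subset ℝ _ h)]
    rfl

lemma continuous_lap {f : E → ℝ} (hf : ContDiff ℝ 2 f) : Continuous (lap f) :=
  continuous_finsetSum _ fun _ _ =>
    ((contDiff_fderiv_apply (n := 1) hf _).continuous_fderiv one_ne_zero).clm_apply
      continuous_const

lemma hasCompactSupport_lap {f : E → ℝ} (hf : HasCompactSupport f) :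
    HasCompactSupport (lap f) :=
  HasCompactSupport.intro hf fun _ hx => lap_eq_zero_of_notMem_tsupport hx

lemma lap_sub {f g : E → ℝ} (hf : ContDiff ℝ 2 f) (hg : ContDiff ℝ 2 g) (x : E) :
    lap (fun z => f z - g z) x = lap f x - lap g x := by
  simp only [lap, ← Finset.sum_sub_distrib]
  refine Finset.sum_congr rfl fun i _ => ?_
  set e : E := EuclideanSpace.single i 1
  have hfg : (fun y => fderiv ℝ (fun z => f z - g z) y e) =
      fun y => fderiv ℝ f y e - fderiv ℝ g y e := funext fun y => by
    rw [fderiv_fun_sub (hf.differentiable two_ne_zero y) (hg.differentiable two_ne_zero y)]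
    rfl
  rw [hfg, fderiv_fun_sub ((contDiff_fderiv_apply (n := 1) hf e).differentiable one_ne_zero x)
    ((contDiff_fderiv_apply (n := 1) hg e).differentiable one_ne_zero x)]
  rfl

lemma lap_comp_const_sub {f : E → ℝ} (hf : ContDiff ℝ 2 f) (x y : E) :
    lap (fun z => f (x - z)) y = lap f (x - y) := by
  refine Finset.sum_congr rfl fun i _ => ?_
  have hf' := (contDiff_fderiv_apply (n := 1) hf (EuclideanSpace.single i 1)).differentiable
    one_ne_zero
  simp_rw [fderiv_comp_const_sub_apply (hf.differentiable two_ne_zero), fderiv_fun_neg,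
    neg_apply, fderiv_comp_const_sub_apply hf', neg_neg]

lemma lap_const_mul_norm_sq (α : ℝ) (x : E) :
    lap (fun z => α * ‖z‖ ^ 2) x = 2 * d * α := by
  have hfst : ∀ y e : E, fderiv ℝ (fun z => α * ‖z‖ ^ 2) y e = 2 * α * ⟪y, e⟫ := fun y e => by
    rw [((hasStrictFDerivAt_norm_sq y).hasFDerivAt.const_mul α).fderiv]
    simp only [smul_apply, innerSL_apply_apply, smul_eq_mul, nsmul_eq_mul]
    push_cast
    ring
  have hsnd : ∀ e : E, fderiv ℝ (fun y => 2 * α * ⟪y, e⟫) x e = 2 * α * ⟪e, e⟫ := fun e => by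
    have h : HasFDerivAt (fun y : E => 2 * α * ⟪y, e⟫) _ x :=
      ((hasFDerivAt_id x).inner ℝ (hasFDerivAt_const e x)).const_mul (2 * α)
    simp [h.fderiv]
  simp only [lap, hfst, hsnd, EuclideanSpace.inner_single_left, PiLp.single_eq_same,
    Real.ringHom_apply, mul_one, Finset.sum_const, Finset.card_univ, Fintype.card_fin,
    nsmul_eq_mul]
  ring

lemma lap_nonpos_of_isLocalMax {g : E → ℝ} {x : E} (hg : ContDiff ℝ 2 g) (h : IsLocalMax g x) :
    lap g x ≤ 0 := by
  refine Finset.sum_nonpos fun i _ => ?_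
  set e : E := EuclideanSpace.single i 1
  have hg' := (contDiff_fderiv_apply (n := 1) hg e).differentiable one_ne_zero
  have hderiv : deriv (fun t : ℝ => g (x + t • e)) = fun t => fderiv ℝ g (x + t • e) e :=
    funext fun t => (hasDerivAt_comp_add_smul (hg.differentiable two_ne_zero) x e t).deriv
  have hline : Continuous fun t : ℝ => x + t • e := by fun_prop
  have hmax : IsLocalMax (fun t : ℝ => g (x + t • e)) 0 :=
    IsLocalMax.comp_continuous (g := fun t : ℝ => x + t • e) (by simpa using h)
      hline.continuousAt
  have := deriv_deriv_nonpos_of_isLocalMax (f := fun t : ℝ => g (x + t • e))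
    (hg.continuous.comp hline).continuousAt hmax
  rwa [hderiv, (hasDerivAt_comp_add_smul hg' x e 0).deriv, zero_smul, add_zero] at this

lemma fderiv_convolution_apply {F ρ : E → ℝ} (hF : LocallyIntegrable F) (hρ : ContDiff ℝ 1 ρ)
    (hcρ : HasCompactSupport ρ) (x e : E) :
    fderiv ℝ (F ⋆[ContinuousLinearMap.lsmul ℝ ℝ] ρ) x e =
      (F ⋆[ContinuousLinearMap.lsmul ℝ ℝ] fun y => fderiv ℝ ρ y e) x := by
  rw [(hcρ.hasFDerivAt_convolution_right _ hF hρ x).fderiv]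
  exact convolution_precompR_apply _ hF (hcρ.fderiv ℝ) (hρ.continuous_fderiv one_ne_zero) x e

lemma lap_convolution {F ρ : E → ℝ} (hF : LocallyIntegrable F) (hρ : ContDiff ℝ 2 ρ)
    (hcρ : HasCompactSupport ρ) (x : E) :
    lap (F ⋆[ContinuousLinearMap.lsmul ℝ ℝ] ρ) x = ∫ t, F t * lap ρ (x - t) := by
  have hsnd : ∀ e : E,
      fderiv ℝ (fun y => fderiv ℝ (F ⋆[ContinuousLinearMap.lsmul ℝ ℝ] ρ) y e) x e =
        ∫ t, F t * fderiv ℝ (fun y => fderiv ℝ ρ y e) (x - t) e := fun e => by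
    simp_rw [fderiv_convolution_apply hF (hρ.of_le one_le_two) hcρ]
    rw [fderiv_convolution_apply hF (contDiff_fderiv_apply (n := 1) hρ e)
      (hcρ.fderiv_apply ℝ e)]
    rfl
  simp only [lap, hsnd, Finset.mul_sum]
  refine (integral_finsetSum _ fun i _ => ?_).symm
  exact ((hcρ.fderiv_apply ℝ _).fderiv_apply ℝ _).convolutionExists_right
    (ContinuousLinearMap.lsmul ℝ ℝ) hF
    (contDiff_fderiv_apply (n := 0) (contDiff_fderiv_apply (n := 1) hρ _) _).continuous x

lemma mul_lap_eq_of_eqOn {u v φ : E → ℝ} {Ω : Set E} (h : EqOn u v Ω) (hφ : tsupport φ ⊆ Ω)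
    (x : E) : u x * lap φ x = v x * lap φ x := by
  by_cases hx : x ∈ tsupport φ
  · rw [h (hφ hx)]
  · simp [lap_eq_zero_of_notMem_tsupport hx]

lemma integrable_mul_lap {u φ : E → ℝ} {K : Set E} (hK : IsCompact K) (hu : ContinuousOn u K)
    (hφ : ContDiff ℝ 2 φ) (hcφ : HasCompactSupport φ) (hsφ : tsupport φ ⊆ K) :
    Integrable fun x => u x * lap φ x := by
  have hind : Integrable (K.indicator u) :=
    (hu.integrableOn_compact hK).integrable_indicator hK.measurableSet
  obtain ⟨C, hC⟩ := (hasCompactSupport_lap hcφ).exists_bound_of_continuous (continuous_lap hφ)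
  simp_rw [mul_lap_eq_of_eqOn (fun x hx => (indicator_of_mem hx u).symm) hsφ,
    mul_comm _ (lap φ _)]
  exact hind.bdd_mul (continuous_lap hφ).aestronglyMeasurable (ae_of_all _ hC)

lemma DistribLapGEOn.mono {u f : E → ℝ} {Ω Ω' : Set E} (h : DistribLapGEOn u f Ω)
    (hΩ : Ω' ⊆ Ω) : DistribLapGEOn u f Ω' :=
  fun φ hφ hcφ hsφ hφ0 => h φ hφ hcφ (hsφ.trans hΩ) hφ0

lemma DistribLapLEOn.mono {u f : E → ℝ} {Ω Ω' : Set E} (h : DistribLapLEOn u f Ω)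
    (hΩ : Ω' ⊆ Ω) : DistribLapLEOn u f Ω' :=
  fun φ hφ hcφ hsφ hφ0 => h φ hφ hcφ (hsφ.trans hΩ) hφ0

lemma DistribLapGEOn.congr {u v f : E → ℝ} {Ω : Set E} (h : DistribLapGEOn u f Ω)
    (huv : EqOn u v Ω) : DistribLapGEOn v f Ω :=
  fun φ hφ hcφ hsφ hφ0 =>
    (h φ hφ hcφ hsφ hφ0).trans_eq (by simp_rw [mul_lap_eq_of_eqOn huv hsφ])

lemma DistribLapGEOn.one_of_ite {u : E → ℝ} {P : E → Prop} [DecidablePred P] {Ω : Set E}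
    (h : DistribLapGEOn u (fun x => if P x then 1 else 0) Ω) :
    DistribLapGEOn u (fun _ => 1) {x | x ∈ Ω ∧ P x} := by
  intro φ hφ hcφ hsφ hφ0
  refine le_of_eq_of_le (integral_congr_ae (Eventually.of_forall fun x => ?_))
    (h φ hφ hcφ (hsφ.trans fun x hx => hx.1) hφ0)
  by_cases hx : x ∈ tsupport φ
  · simp [(hsφ hx).2]
  · simp [image_eq_zero_of_notMem_tsupport hx]

lemma DistribLapGEOn.two_mul_sub {u w : E → ℝ} {Ω K : Set E}
    (hu : DistribLapGEOn u (fun _ => 1) Ω) (hw : DistribLapLEOn w (fun _ => 1) Ω)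
    (hK : IsCompact K) (hΩK : Ω ⊆ K) (hcu : ContinuousOn u K) (hcw : ContinuousOn w K) :
    DistribLapGEOn (fun x => 2 * u x - w x) (fun _ => 1) Ω := by
  intro φ hφ hcφ hsφ hφ0
  have hφ2 : ContDiff ℝ 2 φ := hφ.of_le (WithTop.coe_le_coe.2 le_top)
  have hΔu := hu φ hφ hcφ hsφ hφ0
  have hΔw := hw φ hφ hcφ hsφ hφ0
  simp only [one_mul] at hΔu hΔw ⊢
  simp_rw [sub_mul, mul_assoc]
  rw [integral_sub ((integrable_mul_lap hK hcu hφ2 hcφ (hsφ.trans hΩK)).const_mul 2)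
    (integrable_mul_lap hK hcw hφ2 hcφ (hsφ.trans hΩK)), integral_const_mul 2]
  linarith

noncomputable def mollify (ρ : ContDiffBump (0 : E)) (F : E → ℝ) : E → ℝ :=
  F ⋆[ContinuousLinearMap.lsmul ℝ ℝ] ρ.normed volume

lemma contDiff_mollify (ρ : ContDiffBump (0 : E)) {F : E → ℝ} (hF : LocallyIntegrable F)
    {n : ℕ∞} : ContDiff ℝ n (mollify ρ F) :=
  ρ.hasCompactSupport_normed.contDiff_convolution_right _ hF ρ.contDiff_normed

lemma dist_mollify_le (ρ : ContDiffBump (0 : E)) {F : E → ℝ} (hF : AEStronglyMeasurable F)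
    {x : E} {c κ : ℝ} (h : ∀ y ∈ ball x ρ.rOut, dist (F y) c ≤ κ) :
    dist (mollify ρ F x) c ≤ κ := by
  have hflip : (ContinuousLinearMap.lsmul ℝ ℝ : ℝ →L[ℝ] ℝ →L[ℝ] ℝ).flip =
      ContinuousLinearMap.lsmul ℝ ℝ := by
    ext; simp
  rw [mollify, ← convolution_flip, hflip]
  exact dist_convolution_le (dist_nonneg.trans (h x (mem_ball_self ρ.rOut_pos)))
    ρ.support_normed_eq.subset ρ.nonneg_normed ρ.integral_normed hF h

lemma dist_mollify_indicator_le (ρ : ContDiffBump (0 : E)) {K : Set E} {f : E → ℝ}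
    (hF : AEStronglyMeasurable (K.indicator f)) {η δ : ℝ}
    (huc : ∀ y ∈ K, ∀ z ∈ K, dist y z ≤ η → dist (f y) (f z) ≤ δ) {x p : E} (hp : p ∈ K)
    (hxK : ball x ρ.rOut ⊆ K) (hxp : dist x p + ρ.rOut ≤ η) :
    dist (mollify ρ (K.indicator f) x) (f p) ≤ δ := by
  refine dist_mollify_le ρ hF fun y hy => ?_
  rw [indicator_of_mem (hxK hy)]
  refine huc y (hxK hy) p hp ?_
  linarith [dist_triangle y x p, mem_ball'.1 hy, dist_comm x y]

lemma one_le_lap_mollify (ρ : ContDiffBump (0 : E)) {F : E → ℝ} (hF : LocallyIntegrable F)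
    {Ω : Set E} (hΔ : DistribLapGEOn F (fun _ => 1) Ω) {x : E}
    (hx : closedBall x ρ.rOut ⊆ Ω) : 1 ≤ lap (mollify ρ F) x := by
  set φ : E → ℝ := fun y => ρ.normed volume (x - y)
  have hφ : ContDiff ℝ (⊤ : ℕ∞) φ := ρ.contDiff_normed.comp (contDiff_const.sub contDiff_id)
  have hsφ : tsupport φ ⊆ closedBall x ρ.rOut := by
    refine (tsupport_comp_subset_preimage (ρ.normed volume)
      (f := fun y => x - y) (by fun_prop)).trans fun y hy => ?_
    simpa [ρ.tsupport_normed_eq, dist_eq_norm, norm_sub_rev] using hy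
  have hcφ : HasCompactSupport φ :=
    (isCompact_closedBall x ρ.rOut).of_isClosed_subset (isClosed_tsupport _) hsφ
  calc (1 : ℝ) = ∫ y, 1 * φ y := by
        simp only [one_mul, φ]
        rw [integral_sub_left_eq_self (ρ.normed volume) volume x, ρ.integral_normed]
    _ ≤ ∫ y, F y * lap φ y := hΔ φ hφ hcφ (hsφ.trans hx) fun y => ρ.nonneg_normed _
    _ = lap (mollify ρ F) x := by
        rw [mollify, lap_convolution hF ρ.contDiff_normed ρ.hasCompactSupport_normed]
        simp_rw [← lap_comp_const_sub ρ.contDiff_normed]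
        rfl

lemma exists_notMem_of_isLocalMax_mollify_sub (ρ : ContDiffBump (0 : E)) {F : E → ℝ}
    (hF : LocallyIntegrable F) {Ω : Set E} (hΔ : DistribLapGEOn F (fun _ => 1) Ω) {α : ℝ}
    (hα : 2 * d * α < 1) {x : E} (hmax : IsLocalMax (fun z => mollify ρ F z - α * ‖z‖ ^ 2) x) :
    ∃ y ∈ closedBall x ρ.rOut, y ∉ Ω := by
  by_contra! hx
  have hquad : ContDiff ℝ 2 fun z : E => α * ‖z‖ ^ 2 := contDiff_const.mul (contDiff_norm_sq ℝ)
  have := lap_nonpos_of_isLocalMax ((contDiff_mollify ρ hF).sub hquad) hmax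
  rw [lap_sub (contDiff_mollify ρ hF) hquad, lap_const_mul_norm_sq] at this
  linarith [one_le_lap_mollify ρ hF hΔ hx]

lemma mollify_le_of_isLocalMax_of_le (ρ : ContDiffBump (0 : E)) {K Ω : Set E} {f g : E → ℝ}
    {η δ α : ℝ} (hF : Integrable (K.indicator f)) (hG : Integrable (K.indicator g))
    (hfuc : ∀ y ∈ K, ∀ z ∈ K, dist y z ≤ η → dist (f y) (f z) ≤ δ)
    (hguc : ∀ y ∈ K, ∀ z ∈ K, dist y z ≤ η → dist (g y) (g z) ≤ δ)
    (hΔ : DistribLapGEOn (K.indicator f) (fun _ => 1) Ω) (hα : 2 * d * α < 1)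
    (hρη : 2 * ρ.rOut ≤ η) {x₀ : E} (hx₀ : closedBall x₀ ρ.rOut ⊆ K)
    (hbad : ∀ y ∈ closedBall x₀ ρ.rOut, y ∉ Ω → f y ≤ g y / 2)
    (hmax : IsLocalMax (fun z => max (mollify ρ (K.indicator f) z)
      (mollify ρ (K.indicator g) z) - α * ‖z‖ ^ 2) x₀)
    (hgf : mollify ρ (K.indicator g) x₀ ≤ mollify ρ (K.indicator f) x₀) :
    mollify ρ (K.indicator f) x₀ ≤ 3 * δ := by
  have hfmax : IsLocalMax (fun z => mollify ρ (K.indicator f) z - α * ‖z‖ ^ 2) x₀ := by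
    filter_upwards [hmax] with z hz
    simp only [max_eq_left hgf] at hz
    linarith [le_max_left (mollify ρ (K.indicator f) z) (mollify ρ (K.indicator g) z)]
  obtain ⟨y, hy, hyΩ⟩ :=
    exists_notMem_of_isLocalMax_mollify_sub ρ hF.locallyIntegrable hΔ hα hfmax
  have hxK : ball x₀ ρ.rOut ⊆ K := ball_subset_closedBall.trans hx₀
  have hxy : dist x₀ y + ρ.rOut ≤ η := by linarith [mem_closedBall'.1 hy]
  have hfy := dist_mollify_indicator_le ρ hF.aestronglyMeasurable hfuc (hx₀ hy) hxK hxy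
  have hgy := dist_mollify_indicator_le ρ hG.aestronglyMeasurable hguc (hx₀ hy) hxK hxy
  rw [Real.dist_eq, abs_le] at hfy hgy
  linarith [hbad y hy hyΩ]

lemma max_mollify_le_of_isLocalMax (ρ : ContDiffBump (0 : E)) {K Ωf Ωg : Set E}
    {f g : E → ℝ} {η δ α : ℝ} (hF : Integrable (K.indicator f))
    (hG : Integrable (K.indicator g))
    (hfuc : ∀ y ∈ K, ∀ z ∈ K, dist y z ≤ η → dist (f y) (f z) ≤ δ)
    (hguc : ∀ y ∈ K, ∀ z ∈ K, dist y z ≤ η → dist (g y) (g z) ≤ δ)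
    (hΔf : DistribLapGEOn (K.indicator f) (fun _ => 1) Ωf)
    (hΔg : DistribLapGEOn (K.indicator g) (fun _ => 1) Ωg) (hα : 2 * d * α < 1)
    (hρη : 2 * ρ.rOut ≤ η) {x₀ : E} (hx₀ : closedBall x₀ ρ.rOut ⊆ K)
    (hbadf : ∀ y ∈ closedBall x₀ ρ.rOut, y ∉ Ωf → f y ≤ g y / 2)
    (hbadg : ∀ y ∈ closedBall x₀ ρ.rOut, y ∉ Ωg → g y ≤ f y / 2)
    (hmax : IsLocalMax (fun z => max (mollify ρ (K.indicator f) z)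
      (mollify ρ (K.indicator g) z) - α * ‖z‖ ^ 2) x₀) :
    max (mollify ρ (K.indicator f) x₀) (mollify ρ (K.indicator g) x₀) ≤ 3 * δ := by
  rcases le_total (mollify ρ (K.indicator g) x₀) (mollify ρ (K.indicator f) x₀) with h | h
  · rw [max_eq_left h]
    exact mollify_le_of_isLocalMax_of_le ρ hF hG hfuc hguc hΔf hα hρη hx₀ hbadf hmax h
  · rw [max_eq_right h]
    refine mollify_le_of_isLocalMax_of_le ρ hG hF hguc hfuc hΔg hα hρη hx₀ hbadg ?_ h
    simpa only [max_comm] using hmax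

lemma mollify_le_of_near_sphere (ρ : ContDiffBump (0 : E)) {f : E → ℝ} {r η δ B : ℝ}
    (hF : AEStronglyMeasurable ((closedBall 0 r).indicator f))
    (huc : ∀ y ∈ closedBall (0 : E) r, ∀ z ∈ closedBall (0 : E) r, dist y z ≤ η →
      dist (f y) (f z) ≤ δ)
    (hB : ∀ p ∈ sphere (0 : E) r, f p ≤ B) (hρη : 3 * ρ.rOut ≤ η) {x₀ : E} (hx₀ : x₀ ≠ 0)
    (hx₀r : ‖x₀‖ ≤ r - ρ.rOut) (hx₀near : r - 2 * ρ.rOut ≤ ‖x₀‖) :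
    mollify ρ ((closedBall 0 r).indicator f) x₀ ≤ B + δ := by
  obtain ⟨p, hp, hxp⟩ := exists_mem_sphere_dist_eq_sub_norm hx₀ (by linarith [ρ.rOut_pos])
  have hball : ball x₀ ρ.rOut ⊆ closedBall 0 r := ball_subset_closedBall.trans
    (closedBall_subset_closedBall' (by rw [dist_zero_right]; linarith))
  have := dist_mollify_indicator_le ρ hF huc (sphere_subset_closedBall hp) hball (by linarith)
  rw [Real.dist_eq, abs_le] at this
  linarith [hB p hp]

lemma max_mollify_sub_le_of_isMaxOn (hd : 0 < d) (ρ : ContDiffBump (0 : E)) {r η δ : ℝ}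
    {f g : E → ℝ} {Ωf Ωg : Set E} (hF : Integrable ((closedBall 0 r).indicator f))
    (hG : Integrable ((closedBall 0 r).indicator g))
    (hfuc : ∀ y ∈ closedBall (0 : E) r, ∀ z ∈ closedBall (0 : E) r, dist y z ≤ η →
      dist (f y) (f z) ≤ δ)
    (hguc : ∀ y ∈ closedBall (0 : E) r, ∀ z ∈ closedBall (0 : E) r, dist y z ≤ η →
      dist (g y) (g z) ≤ δ)
    (hfB : ∀ x ∈ sphere (0 : E) r, f x ≤ r ^ 2 / (2 * d))
    (hgB : ∀ x ∈ sphere (0 : E) r, g x ≤ r ^ 2 / (2 * d))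
    (hΔf : DistribLapGEOn ((closedBall 0 r).indicator f) (fun _ => 1) Ωf)
    (hΔg : DistribLapGEOn ((closedBall 0 r).indicator g) (fun _ => 1) Ωg)
    (hbadf : ∀ y ∈ ball (0 : E) r, y ∉ Ωf → f y ≤ g y / 2)
    (hbadg : ∀ y ∈ ball (0 : E) r, y ∉ Ωg → g y ≤ f y / 2)
    (hδ : 0 < δ) (hδ1 : δ ≤ 1) (hδr : 2 * δ < r) (hρδ : ρ.rOut ≤ δ) (hρη : 3 * ρ.rOut ≤ η)
    {x₀ : E} (hx₀ : ‖x₀‖ ≤ r - ρ.rOut)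
    (hmax : IsMaxOn (fun z => max (mollify ρ ((closedBall 0 r).indicator f) z)
      (mollify ρ ((closedBall 0 r).indicator g) z) - (1 - δ) / (2 * d) * ‖z‖ ^ 2)
      (closedBall 0 (r - ρ.rOut)) x₀) :
    max (mollify ρ ((closedBall 0 r).indicator f) x₀) (mollify ρ ((closedBall 0 r).indicator g) x₀)
      - (1 - δ) / (2 * d) * ‖x₀‖ ^ 2 ≤ 3 * δ + (r ^ 2 - (1 - δ) * (r - 2 * δ) ^ 2) / (2 * d) := by
  have hdR : (0 : ℝ) < d := Nat.cast_pos.2 hd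
  have hρ := ρ.rOut_pos
  have hα0 : 0 ≤ (1 - δ) / (2 * d) := div_nonneg (by linarith) (by positivity)
  have hgap : 0 ≤ (r ^ 2 - (1 - δ) * (r - 2 * δ) ^ 2) / (2 * d) :=
    div_nonneg (by nlinarith) (by positivity)
  rcases le_or_gt (r - 2 * ρ.rOut) ‖x₀‖ with hnear | hin
  · have hx₀0 : x₀ ≠ 0 := by rintro rfl; rw [norm_zero] at hnear; linarith
    have hfm := mollify_le_of_near_sphere ρ hF.aestronglyMeasurable hfuc hfB hρη hx₀0 hx₀ hnear
    have hgm := mollify_le_of_near_sphere ρ hG.aestronglyMeasurable hguc hgB hρη hx₀0 hx₀ hnear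
    have hq : (1 - δ) / (2 * d) * (r - 2 * δ) ^ 2 ≤ (1 - δ) / (2 * d) * ‖x₀‖ ^ 2 :=
      mul_le_mul_of_nonneg_left (pow_le_pow_left₀ (by linarith) (by linarith) 2) hα0
    have : r ^ 2 / (2 * d) - (1 - δ) / (2 * d) * (r - 2 * δ) ^ 2 =
        (r ^ 2 - (1 - δ) * (r - 2 * δ) ^ 2) / (2 * d) := by
      field_simp
    linarith [max_le hfm hgm]
  · have hloc := hmax.isLocalMax (Filter.mem_of_superset
      (isOpen_ball.mem_nhds (mem_ball_zero_iff.2 (by linarith))) ball_subset_closedBall)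
    have hsub : closedBall x₀ ρ.rOut ⊆ ball 0 r :=
      closedBall_subset_ball' (by rw [dist_zero_right]; linarith)
    have hm := max_mollify_le_of_isLocalMax ρ hF hG hfuc hguc hΔf hΔg
      (by field_simp; linarith) (by linarith) (hsub.trans ball_subset_closedBall)
      (fun y hy => hbadf y (hsub hy)) (fun y hy => hbadg y (hsub hy)) hloc
    nlinarith [norm_nonneg x₀]

lemma max_apply_zero_le_of_mollify (hd : 0 < d) (ρ : ContDiffBump (0 : E)) {r η δ : ℝ}
    {f g : E → ℝ} {Ωf Ωg : Set E} (hF : Integrable ((closedBall 0 r).indicator f))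
    (hG : Integrable ((closedBall 0 r).indicator g))
    (hfuc : ∀ y ∈ closedBall (0 : E) r, ∀ z ∈ closedBall (0 : E) r, dist y z ≤ η →
      dist (f y) (f z) ≤ δ)
    (hguc : ∀ y ∈ closedBall (0 : E) r, ∀ z ∈ closedBall (0 : E) r, dist y z ≤ η →
      dist (g y) (g z) ≤ δ)
    (hfB : ∀ x ∈ sphere (0 : E) r, f x ≤ r ^ 2 / (2 * d))
    (hgB : ∀ x ∈ sphere (0 : E) r, g x ≤ r ^ 2 / (2 * d))
    (hΔf : DistribLapGEOn ((closedBall 0 r).indicator f) (fun _ => 1) Ωf)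
    (hΔg : DistribLapGEOn ((closedBall 0 r).indicator g) (fun _ => 1) Ωg)
    (hbadf : ∀ y ∈ ball (0 : E) r, y ∉ Ωf → f y ≤ g y / 2)
    (hbadg : ∀ y ∈ ball (0 : E) r, y ∉ Ωg → g y ≤ f y / 2)
    (hδ : 0 < δ) (hδ1 : δ ≤ 1) (hδr : 2 * δ < r) (hρδ : ρ.rOut ≤ δ) (hρη : 3 * ρ.rOut ≤ η) :
    max (f 0) (g 0) ≤ 4 * δ + (r ^ 2 - (1 - δ) * (r - 2 * δ) ^ 2) / (2 * d) := by
  set fm := mollify ρ ((closedBall 0 r).indicator f)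
  set gm := mollify ρ ((closedBall 0 r).indicator g)
  set H := fun z : E => max (fm z) (gm z) - (1 - δ) / (2 * d) * ‖z‖ ^ 2
  have hH : Continuous H := ((contDiff_mollify ρ hF.locallyIntegrable (n := 0)).continuous.max
    (contDiff_mollify ρ hG.locallyIntegrable (n := 0)).continuous).sub (by fun_prop)
  have h0 : (0 : E) ∈ closedBall 0 (r - ρ.rOut) := mem_closedBall_self (by linarith)
  obtain ⟨x₀, hx₀, hmax⟩ := (isCompact_closedBall (0 : E) (r - ρ.rOut)).exists_isMaxOn
    ⟨0, h0⟩ hH.continuousOn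
  have hx₀H : H x₀ ≤ 3 * δ + (r ^ 2 - (1 - δ) * (r - 2 * δ) ^ 2) / (2 * d) :=
    max_mollify_sub_le_of_isMaxOn hd ρ hF hG hfuc hguc hfB hgB hΔf hΔg hbadf hbadg
    hδ hδ1 hδr hρδ hρη (mem_closedBall_zero_iff.1 hx₀) hmax
  have hball0 : ball (0 : E) ρ.rOut ⊆ closedBall 0 r :=
    ball_subset_closedBall.trans (closedBall_subset_closedBall (by linarith))
  have hdist : dist (0 : E) 0 + ρ.rOut ≤ η := by linarith [dist_self (0 : E), ρ.rOut_pos]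
  have hf0 : dist (fm 0) (f 0) ≤ δ := dist_mollify_indicator_le ρ hF.aestronglyMeasurable hfuc
    (hball0 (mem_ball_self ρ.rOut_pos)) hball0 hdist
  have hg0 : dist (gm 0) (g 0) ≤ δ := dist_mollify_indicator_le ρ hG.aestronglyMeasurable hguc
    (hball0 (mem_ball_self ρ.rOut_pos)) hball0 hdist
  rw [Real.dist_eq, abs_le] at hf0 hg0
  have h0x : H 0 ≤ H x₀ := hmax h0
  have hH0 : H 0 = max (fm 0) (gm 0) := by simp [H]
  have hcenter : max (f 0) (g 0) ≤ max (fm 0) (gm 0) + δ :=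
    max_le (by linarith [le_max_left (fm 0) (gm 0)]) (by linarith [le_max_right (fm 0) (gm 0)])
  linarith

lemma max_apply_zero_le_of_distribLapGEOn (hd : 0 < d) {r : ℝ} {f g : E → ℝ} {Ωf Ωg : Set E}
    (hf : ContinuousOn f (closedBall 0 r)) (hg : ContinuousOn g (closedBall 0 r))
    (hfB : ∀ x ∈ sphere (0 : E) r, f x ≤ r ^ 2 / (2 * d))
    (hgB : ∀ x ∈ sphere (0 : E) r, g x ≤ r ^ 2 / (2 * d))
    (hΔf : DistribLapGEOn ((closedBall 0 r).indicator f) (fun _ => 1) Ωf)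
    (hΔg : DistribLapGEOn ((closedBall 0 r).indicator g) (fun _ => 1) Ωg)
    (hbadf : ∀ y ∈ ball (0 : E) r, y ∉ Ωf → f y ≤ g y / 2)
    (hbadg : ∀ y ∈ ball (0 : E) r, y ∉ Ωg → g y ≤ f y / 2)
    {δ : ℝ} (hδ : 0 < δ) (hδ1 : δ ≤ 1) (hδr : 2 * δ < r) :
    max (f 0) (g 0) ≤ 4 * δ + (r ^ 2 - (1 - δ) * (r - 2 * δ) ^ 2) / (2 * d) := by
  have hK := isCompact_closedBall (0 : E) r
  obtain ⟨ηf, hηf, hfuc⟩ :=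
    uniformContinuousOn_iff_le.1 (hK.uniformContinuousOn_of_continuous hf) δ hδ
  obtain ⟨ηg, hηg, hguc⟩ :=
    uniformContinuousOn_iff_le.1 (hK.uniformContinuousOn_of_continuous hg) δ hδ
  set ε := min (min ηf ηg / 3) δ
  have hε : 0 < ε := lt_min (by positivity) hδ
  have hεη : 3 * ε ≤ min ηf ηg := by linarith [min_le_left (min ηf ηg / 3) δ]
  let ρ : ContDiffBump (0 : E) := ⟨ε / 2, ε, half_pos hε, half_lt_self hε⟩
  exact max_apply_zero_le_of_mollify hd ρ
    ((hf.integrableOn_compact hK).integrable_indicator measurableSet_closedBall)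
    ((hg.integrableOn_compact hK).integrable_indicator measurableSet_closedBall)
    (fun y hy z hz h => hfuc y hy z hz (h.trans (min_le_left _ _)))
    (fun y hy z hz h => hguc y hy z hz (h.trans (min_le_right _ _)))
    hfB hgB hΔf hΔg hbadf hbadg hδ hδ1 hδr (min_le_right _ _) hεη

theorem max_apply_zero_nonpos_of_distribLapGEOn (hd : 0 < d) {r : ℝ} (hr : 0 < r)
    {f g : E → ℝ} (hf : ContinuousOn f (closedBall 0 r)) (hg : ContinuousOn g (closedBall 0 r))
    (hfB : ∀ x ∈ sphere (0 : E) r, f x ≤ r ^ 2 / (2 * d))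
    (hgB : ∀ x ∈ sphere (0 : E) r, g x ≤ r ^ 2 / (2 * d))
    (hΔf : DistribLapGEOn f (fun _ => 1) {x | x ∈ ball 0 r ∧ g x / 2 < f x})
    (hΔg : DistribLapGEOn g (fun _ => 1) {x | x ∈ ball 0 r ∧ f x / 2 < g x}) :
    max (f 0) (g 0) ≤ 0 := by
  have hlim : Tendsto (fun δ : ℝ => 4 * δ + (r ^ 2 - (1 - δ) * (r - 2 * δ) ^ 2) / (2 * d))
      (𝓝[>] 0) (𝓝 0) := by
    have : Continuous fun δ : ℝ => 4 * δ + (r ^ 2 - (1 - δ) * (r - 2 * δ) ^ 2) / (2 * d) := by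
      fun_prop
    simpa using (this.tendsto 0).mono_left nhdsWithin_le_nhds
  refine ge_of_tendsto hlim ?_
  filter_upwards [Ioo_mem_nhdsGT (lt_min one_pos (by positivity : 0 < r / 2))] with δ hδ
  exact max_apply_zero_le_of_distribLapGEOn hd hf hg hfB hgB
    (hΔf.congr fun x hx => (indicator_of_mem (ball_subset_closedBall hx.1) f).symm)
    (hΔg.congr fun x hx => (indicator_of_mem (ball_subset_closedBall hx.1) g).symm)
    (fun y hy hyΩ => not_lt.1 fun h => hyΩ ⟨hy, h⟩) (fun y hy hyΩ => not_lt.1 fun h => hyΩ ⟨hy, h⟩)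
    hδ.1 (hδ.2.le.trans (min_le_left _ _)) (by linarith [hδ.2.trans_le (min_le_right 1 (r / 2))])

end Euclidean

/-- Non-degeneracy for the system of obstacle problems: if `u - ½w` (resp. `u`) is at
most `r²/(4d)` on `∂B_r`, then `u(0) = ½w(0)` (resp. `u(0) = 0`). -/
theorem stmt4 (d : ℕ) (hd : 0 < d) (r : ℝ) (hr : 0 < r)
    (u w : EuclideanSpace ℝ (Fin d) → ℝ)
    (hcu : ContinuousOn u (closedBall 0 r)) (hcw : ContinuousOn w (closedBall 0 r))
    (hsol : SolPair u w (ball 0 r)) :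
    ((∀ x ∈ sphere (0 : EuclideanSpace ℝ (Fin d)) r, u x - w x / 2 ≤ r^2 / (4 * d)) →
        u 0 = w 0 / 2) ∧
    ((∀ x ∈ sphere (0 : EuclideanSpace ℝ (Fin d)) r, u x ≤ r^2 / (4 * d)) →
        u 0 = 0) := by
  obtain ⟨⟨hcon, hΔu, hΔw⟩, -, -, hΔw'⟩ := hsol
  have hhalf : r ^ 2 / (2 * (d : ℝ)) = 2 * (r ^ 2 / (4 * d)) := by field_simp; ring
  have h0 := hcon 0 (mem_ball_self hr)
  constructor
  · intro hB
    have hcv : ContinuousOn (fun x => 2 * u x - w x) (closedBall 0 r) :=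
      (continuousOn_const.mul hcu).sub hcw
    have hvB : ∀ x ∈ sphere 0 r, 2 * u x - w x ≤ r ^ 2 / (2 * d) := fun x hx => by
      linarith [hB x hx]
    have hΔv := (hΔu.one_of_ite.two_mul_sub (hΔw'.mono fun x hx => hx.1)
      (isCompact_closedBall 0 r) (fun x hx => ball_subset_closedBall hx.1) hcu hcw).mono
      (Ω' := {x | x ∈ ball 0 r ∧ (2 * u x - w x) / 2 < 2 * u x - w x})
      fun x hx => ⟨hx.1, by linarith [hx.2]⟩
    have := max_apply_zero_nonpos_of_distribLapGEOn hd hr hcv hcv hvB hvB hΔv hΔv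
    rw [max_self] at this
    linarith
  · intro hB
    have hcl : closure (ball (0 : EuclideanSpace ℝ (Fin d)) r) = closedBall 0 r :=
      closure_ball 0 hr.ne'
    have hwu : ∀ x ∈ sphere 0 r, w x / 2 ≤ u x := fun x hx =>
      le_on_closure (fun y hy => (hcon y hy).2.2.1) (hcl ▸ hcw.div_const 2) (hcl ▸ hcu)
        (hcl ▸ sphere_subset_closedBall hx)
    have := max_apply_zero_nonpos_of_distribLapGEOn hd hr hcu hcw
      (fun x hx => by linarith [hB x hx, (by positivity : 0 ≤ r ^ 2 / (4 * (d : ℝ)))])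
      (fun x hx => by linarith [hB x hx, hwu x hx]) hΔu.one_of_ite hΔw.one_of_ite
    linarith [le_max_left (u 0) (w 0)]
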